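/- Let G be a finite simple graph and let k ≥ 4 be an even integer. Then every eigenvalue of the signless Laplacian matrix Q(G) = D(G) + A(G) of G is a signless Laplacian H-eigenvalue of the generalized power hypergraph G^{k,k/2}. -/

import Mathlib

/-!
Write an eigenvector `y` of `Q(G)` at each vertex as a product `y v = ∏ⱼ x (v, j)` of `s` reals
with equal squares (one of them carries the sign of `y v`, all have absolute value `|y v| ^ (1/s)`).
Equal squares give `x (v, i) ^ (2s - 1) = y v * ∏_{j ≠ i} x (v, j)`, and the edges through
`(v, i)` contribute `∏_{j ≠ i} x (v, j) * ∑_{u ~ v} y u`; so the H-eigenvalue equation at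
`(v, i)` is the eigenvalue equation of `Q(G)` at `v` multiplied by `∏_{j ≠ i} x (v, j)`.
-/

open Finset

/-- The edge set of the generalized power hypergraph `G^{k, k/2}` (with `s = k/2`):
each edge `{u,v}` of `G` is blown up into the `2s`-set `({u} × Fin s) ∪ ({v} × Fin s)`. -/
def powerEdges {V : Type*} [Fintype V] [DecidableEq V] (G : SimpleGraph V)
    [DecidableRel G.Adj] (s : ℕ) : Finset (Finset (V × Fin s)) :=
  (Finset.univ.filter fun p : V × V => G.Adj p.1 p.2).image
    (fun p => ({p.1} ×ˢ (Finset.univ : Finset (Fin s)))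
        ∪ ({p.2} ×ˢ (Finset.univ : Finset (Fin s))))

/-- `lam` is an adjacency H-eigenvalue of the generalized power hypergraph `G^{k,s}`
(`k = 2s`) with H-eigenvector `x`. -/
def IsAdjHEigPow {V : Type*} [Fintype V] [DecidableEq V] (G : SimpleGraph V)
    [DecidableRel G.Adj] (k s : ℕ) (lam : ℝ) (x : V × Fin s → ℝ) : Prop :=
  x ≠ 0 ∧ ∀ p : V × Fin s,
    lam * x p ^ (k - 1)
      = ∑ e ∈ (powerEdges G s).filter (fun e => p ∈ e), ∏ w ∈ e.erase p, x w

/-- `lam` is a signless Laplacian H-eigenvalue of the generalized power hypergraph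
`G^{k,s}` (`k = 2s`) with H-eigenvector `x`. -/
def IsQHEigPow {V : Type*} [Fintype V] [DecidableEq V] (G : SimpleGraph V)
    [DecidableRel G.Adj] (k s : ℕ) (lam : ℝ) (x : V × Fin s → ℝ) : Prop :=
  x ≠ 0 ∧ ∀ p : V × Fin s,
    lam * x p ^ (k - 1)
      = (((powerEdges G s).filter (fun e => p ∈ e)).card : ℝ) * x p ^ (k - 1)
        + ∑ e ∈ (powerEdges G s).filter (fun e => p ∈ e), ∏ w ∈ e.erase p, x w

section PowerHypergraph

variable {V : Type*} [DecidableEq V] {s : ℕ}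

def powerEdge (v u : V) (s : ℕ) : Finset (V × Fin s) :=
  ({v} ×ˢ univ) ∪ ({u} ×ˢ univ)

lemma mem_powerEdge {v u w : V} {j : Fin s} : (w, j) ∈ powerEdge v u s ↔ w = v ∨ w = u := by
  simp [powerEdge, eq_comm]

lemma powerEdge_comm (v u : V) (s : ℕ) : powerEdge v u s = powerEdge u v s :=
  union_comm _ _

lemma powerEdge_injective (v : V) (hs : 0 < s) : Function.Injective (powerEdge v · s) := by
  intro u u' (h : powerEdge v u s = powerEdge v u' s)
  have hu : (u, (⟨0, hs⟩ : Fin s)) ∈ powerEdge v u' s := h ▸ mem_powerEdge.mpr (Or.inr rfl)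
  have hu' : (u', (⟨0, hs⟩ : Fin s)) ∈ powerEdge v u s := h ▸ mem_powerEdge.mpr (Or.inr rfl)
  rw [mem_powerEdge] at hu hu'
  grind

lemma erase_powerEdge {v u : V} (huv : u ≠ v) (i : Fin s) :
    (powerEdge v u s).erase (v, i) = ({v} ×ˢ univ.erase i) ∪ ({u} ×ˢ univ) := by
  ext ⟨w, j⟩
  simp only [powerEdge, mem_erase, mem_union, mem_product, mem_singleton, mem_univ, and_true,
    ne_eq, Prod.mk.injEq]
  grind

lemma prod_erase_powerEdge {M : Type*} [CommMonoid M] (x : V × Fin s → M) {v u : V}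
    (huv : u ≠ v) (i : Fin s) :
    ∏ w ∈ (powerEdge v u s).erase (v, i), x w
      = (∏ j ∈ univ.erase i, x (v, j)) * ∏ j, x (u, j) := by
  rw [erase_powerEdge huv, prod_union, prod_product, prod_product, prod_singleton, prod_singleton]
  rw [disjoint_left]
  rintro ⟨w, j⟩ hv hu
  simp only [mem_product, mem_singleton] at hv hu
  exact huv (hu.1 ▸ hv.1)

variable [Fintype V] (G : SimpleGraph V) [DecidableRel G.Adj]

lemma filter_mem_powerEdges (v : V) (i : Fin s) :
    (powerEdges G s).filter (fun e => (v, i) ∈ e)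
      = (G.neighborFinset v).image (powerEdge v · s) := by
  ext e
  simp only [powerEdges, mem_filter, mem_image, mem_univ, true_and,
    SimpleGraph.mem_neighborFinset]
  constructor
  · rintro ⟨⟨⟨a, b⟩, hab, rfl⟩, hmem⟩
    rcases mem_powerEdge.mp hmem with rfl | rfl
    · exact ⟨b, hab, rfl⟩
    · exact ⟨a, hab.symm, powerEdge_comm _ _ _⟩
  · rintro ⟨u, hvu, rfl⟩
    exact ⟨⟨(v, u), hvu, rfl⟩, mem_powerEdge.mpr (Or.inl rfl)⟩

lemma card_filter_mem_powerEdges (hs : 0 < s) (v : V) (i : Fin s) :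
    #((powerEdges G s).filter (fun e => (v, i) ∈ e)) = G.degree v := by
  rw [filter_mem_powerEdges, card_image_of_injective _ (powerEdge_injective v hs),
    SimpleGraph.card_neighborFinset_eq_degree]

lemma sum_filter_mem_powerEdges {R : Type*} [CommSemiring R] (hs : 0 < s) (x : V × Fin s → R)
    (v : V) (i : Fin s) :
    ∑ e ∈ (powerEdges G s).filter (fun e => (v, i) ∈ e), ∏ w ∈ e.erase (v, i), x w
      = (∏ j ∈ univ.erase i, x (v, j)) * ∑ u ∈ G.neighborFinset v, ∏ j, x (u, j) := by
  rw [filter_mem_powerEdges, sum_image fun u _ u' _ h => powerEdge_injective v hs h, mul_sum]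
  refine sum_congr rfl fun u hu => prod_erase_powerEdge x ?_ i
  exact (G.ne_of_adj ((G.mem_neighborFinset v u).mp hu)).symm

end PowerHypergraph

lemma pow_two_mul_card_sub_one_eq_prod_mul_prod_erase {ι R : Type*} [Fintype ι] [DecidableEq ι]
    [CommMonoid R] {x : ι → R} {c : R} (hx : ∀ j, x j ^ 2 = c) (i : ι) :
    x i ^ (2 * Fintype.card ι - 1) = (∏ j, x j) * ∏ j ∈ univ.erase i, x j := by
  have hcard : 0 < Fintype.card ι := Fintype.card_pos_iff.mpr ⟨i⟩
  calc x i ^ (2 * Fintype.card ι - 1) = x i * c ^ (Fintype.card ι - 1) := by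
        rw [← hx i, ← pow_mul, ← pow_succ']
        congr 1
        omega
    _ = x i * ∏ j ∈ univ.erase i, x j ^ 2 := by
        rw [prod_congr rfl fun j _ => hx j, prod_const, card_erase_of_mem (mem_univ i), card_univ]
    _ = (∏ j, x j) * ∏ j ∈ univ.erase i, x j := by
        rw [← mul_prod_erase univ x (mem_univ i), prod_pow, mul_assoc, sq]

lemma Real.exists_fin_prod_eq_and_sq_const {n : ℕ} (hn : 0 < n) (y : ℝ) :
    ∃ (r : Fin n → ℝ) (c : ℝ), ∏ j, r j = y ∧ ∀ j, r j ^ 2 = c := by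
  obtain ⟨m, rfl⟩ := Nat.exists_eq_add_one_of_ne_zero hn.ne'
  set a := |y| ^ (((m + 1 : ℕ) : ℝ)⁻¹)
  have ha : a ^ (m + 1) = |y| := Real.rpow_inv_natCast_pow (abs_nonneg y) m.succ_ne_zero
  refine ⟨Fin.cons (if 0 ≤ y then a else -a) fun _ => a, a ^ 2, ?_, ?_⟩
  · rw [Fin.prod_cons, prod_const, card_univ, Fintype.card_fin]
    split_ifs with hy
    · rw [← pow_succ', ha, abs_of_nonneg hy]
    · rw [neg_mul, ← pow_succ', ha, abs_of_neg (not_le.mp hy), neg_neg]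
  · intro j
    refine Fin.cases ?_ (fun _ => rfl) j
    split_ifs <;> simp

section SignlessLaplacian

variable {V : Type*} [Fintype V] [DecidableEq V] (G : SimpleGraph V) [DecidableRel G.Adj]

lemma signlessLap_mulVec_apply {R : Type*} [NonAssocSemiring R] (y : V → R) (v : V) :
    (Matrix.of fun u w : V => (if u = w then (G.degree u : R) else 0)
        + (if G.Adj u w then (1 : R) else 0)).mulVec y v
      = G.degree v * y v + ∑ u ∈ G.neighborFinset v, y u := by
  have hQ : (Matrix.of fun u w : V => (if u = w then (G.degree u : R) else 0)
      + (if G.Adj u w then (1 : R) else 0)) = G.degMatrix R + G.adjMatrix R := by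
    ext u w
    simp [SimpleGraph.degMatrix, Matrix.diagonal_apply]
  rw [hQ, Matrix.add_mulVec, Pi.add_apply, SimpleGraph.degMatrix_mulVec_apply,
    SimpleGraph.adjMatrix_mulVec_apply]

theorem isQHEigPow_of_prod_eq {k s : ℕ} (hks : k = 2 * s) (hs : 0 < s) {lam : ℝ} {y : V → ℝ}
    (hy0 : y ≠ 0) (hy : ∀ v, G.degree v * y v + ∑ u ∈ G.neighborFinset v, y u = lam * y v)
    {x : V × Fin s → ℝ} {c : V → ℝ} (hprod : ∀ v, ∏ j, x (v, j) = y v)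
    (hsq : ∀ v j, x (v, j) ^ 2 = c v) :
    IsQHEigPow G k s lam x := by
  refine ⟨?_, ?_⟩
  · obtain ⟨v, hv⟩ := Function.ne_iff.mp hy0
    rintro rfl
    simp [← hprod v, hs.ne'] at hv
  · rintro ⟨v, i⟩
    have hpow := pow_two_mul_card_sub_one_eq_prod_mul_prod_erase (hsq v) i
    rw [Fintype.card_fin, hprod] at hpow
    rw [card_filter_mem_powerEdges G hs, sum_filter_mem_powerEdges G hs, hks, hpow]
    simp only [hprod]
    linear_combination -(∏ j ∈ univ.erase i, x (v, j)) * hy v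

end SignlessLaplacian

/-- every eigenvalue of the signless Laplacian matrix `Q(G) = D(G) + A(G)` of
a finite simple graph `G` is a signless Laplacian H-eigenvalue of the generalized power
hypergraph `G^{k,k/2}`. -/
theorem stmt12 {V : Type*} [Fintype V] [DecidableEq V] (G : SimpleGraph V)
    [DecidableRel G.Adj] (k s : ℕ) (hk : 4 ≤ k) (hks : k = 2 * s)
    (lam : ℝ)
    (hlam : ∃ y : V → ℝ, y ≠ 0 ∧
      (Matrix.of fun u w : V =>
          (if u = w then (G.degree u : ℝ) else 0)
            + (if G.Adj u w then (1 : ℝ) else 0)).mulVec y = lam • y) :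
    ∃ x : V × Fin s → ℝ, IsQHEigPow G k s lam x := by
  obtain ⟨y, hy0, hy⟩ := hlam
  have hs : 0 < s := by omega
  choose r c hprod hsq using fun v => Real.exists_fin_prod_eq_and_sq_const hs (y v)
  refine ⟨fun p => r p.1 p.2, isQHEigPow_of_prod_eq G hks hs hy0 (fun v => ?_) hprod hsq⟩
  rw [← signlessLap_mulVec_apply, hy, Pi.smul_apply, smul_eq_mul]
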